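/- The function f(x) = log(1+x) - 2 + 3/(x+1) - 1/(x+1)² has exactly one root c* on (0, ∞); moreover f is negative on (0, c*) and positive on (c*, ∞), and 2 < c* < 3. -/

import Mathlib

/-!
With `t = x + 1`, the derivative of `fB` is `(t - 1)(t - 2) / t³ = x (x - 1) / (x + 1)³`, so `fB`
decreases on `[0, 1]` from `fB 0 = 0` and increases on `[1, ∞)`. Hence `fB < 0` on `(0, 1]`,
and on `[1, ∞)` it has exactly one zero, which lies in `(2, 3)` because
`fB 2 = log 3 - 10/9 < 0 < log 4 - 21/16 = fB 3`.
-/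

noncomputable def fB (x : ℝ) : ℝ :=
  Real.log (1 + x) - 2 + 3 / (x + 1) - 1 / (x + 1) ^ 2

open Real Set

lemma hasDerivAt_fB {x : ℝ} (hx : -1 < x) :
    HasDerivAt fB (x * (x - 1) / (x + 1) ^ 3) x := by
  have hx1 : x + 1 ≠ 0 := by linarith
  have hx1' : 1 + x ≠ 0 := by linarith
  have hlin : HasDerivAt (fun y : ℝ => y + 1) 1 x := (hasDerivAt_id x).add_const 1
  have hlog : HasDerivAt (fun y : ℝ => log (1 + y)) (1 / (1 + x)) x := by
    simpa using ((hasDerivAt_id x).const_add 1).log hx1'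
  have hinv : HasDerivAt (fun y : ℝ => 3 / (y + 1)) ((0 * (x + 1) - 3 * 1) / (x + 1) ^ 2) x :=
    (hasDerivAt_const x 3).div hlin hx1
  have hinv_sq : HasDerivAt (fun y : ℝ => 1 / (y + 1) ^ 2)
      ((0 * (x + 1) ^ 2 - 1 * (2 * (x + 1) ^ 1 * 1)) / ((x + 1) ^ 2) ^ 2) x :=
    (hasDerivAt_const x 1).div (hlin.pow 2) (pow_ne_zero 2 hx1)
  refine (((hlog.sub_const 2).add hinv).sub hinv_sq).congr_deriv ?_
  field_simp
  ring

lemma continuousOn_fB : ContinuousOn fB (Ioi (-1)) := fun _ hx =>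
  (hasDerivAt_fB hx).continuousAt.continuousWithinAt

lemma fB_zero : fB 0 = 0 := by norm_num [fB]

lemma fB_two_neg : fB 2 < 0 := by
  have h : fB 2 = log 3 - 10 / 9 := by norm_num [fB]; ring
  rw [h]
  linarith [log_three_lt_d9]

lemma fB_three_pos : 0 < fB 3 := by
  have h : fB 3 = 2 * log 2 - 21 / 16 := by norm_num [fB, ← log_four_eq]; ring
  rw [h]
  linarith [log_two_gt_d9]

lemma strictAntiOn_fB : StrictAntiOn fB (Icc 0 1) := by
  refine strictAntiOn_of_deriv_neg (convex_Icc 0 1)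
    (continuousOn_fB.mono fun x hx => by simp only [mem_Ioi]; linarith [hx.1]) ?_
  intro x hx
  rw [interior_Icc] at hx
  obtain ⟨hx0, hx1⟩ := hx
  rw [(hasDerivAt_fB (by linarith)).deriv]
  exact div_neg_of_neg_of_pos (mul_neg_of_pos_of_neg hx0 (by linarith)) (pow_pos (by linarith) 3)

lemma strictMonoOn_fB : StrictMonoOn fB (Ici 1) := by
  refine strictMonoOn_of_deriv_pos (convex_Ici 1)
    (continuousOn_fB.mono fun x hx => by simp only [mem_Ioi]; linarith [mem_Ici.1 hx]) ?_
  intro x hx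
  rw [interior_Ici, mem_Ioi] at hx
  rw [(hasDerivAt_fB (by linarith)).deriv]
  exact div_pos (mul_pos (by linarith) (by linarith)) (pow_pos (by linarith) 3)

lemma fB_neg_of_pos_of_le_one {x : ℝ} (hx0 : 0 < x) (hx1 : x ≤ 1) : fB x < 0 :=
  fB_zero ▸ strictAntiOn_fB ⟨le_rfl, zero_le_one⟩ ⟨hx0.le, hx1⟩ hx0

lemma exists_fB_eq_zero_mem_Ioo : ∃ c ∈ Ioo (2 : ℝ) 3, fB c = 0 :=
  intermediate_value_Ioo (by norm_num)
    (continuousOn_fB.mono fun x hx => by simp only [mem_Ioi]; linarith [hx.1])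
    ⟨fB_two_neg, fB_three_pos⟩

theorem stmt_17 :
    ∃ c : ℝ, 0 < c ∧ fB c = 0 ∧
      (∀ x : ℝ, 0 < x → x < c → fB x < 0) ∧
      (∀ x : ℝ, c < x → 0 < fB x) ∧
      2 < c ∧ c < 3 ∧
      (∀ c' : ℝ, 0 < c' → fB c' = 0 → c' = c) := by
  obtain ⟨c, ⟨hc2, hc3⟩, hfc⟩ := exists_fB_eq_zero_mem_Ioo
  have hc1 : c ∈ Ici (1 : ℝ) := mem_Ici.2 (by linarith)
  have hneg : ∀ x : ℝ, 0 < x → x < c → fB x < 0 := by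
    intro x hx0 hxc
    rcases le_or_gt x 1 with hx1 | hx1
    · exact fB_neg_of_pos_of_le_one hx0 hx1
    · exact hfc ▸ strictMonoOn_fB (mem_Ici.2 hx1.le) hc1 hxc
  have hpos : ∀ x : ℝ, c < x → 0 < fB x := fun x hcx =>
    hfc ▸ strictMonoOn_fB hc1 (mem_Ici.2 (by linarith)) hcx
  refine ⟨c, by linarith, hfc, hneg, hpos, hc2, hc3, fun c' hc'0 hfc' => ?_⟩
  rcases lt_trichotomy c' c with h | h | h
  · exact absurd hfc' (hneg c' hc'0 h).ne
  · exact h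
  · exact absurd hfc' (hpos c' h).ne'
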